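/- Let σ be a permutation of {1,…,n}. If T(σ) contains values (a,c,b) forming a 132 pattern (i.e. a < b < c and they occur in T(σ) in the order a, c, b), then there exists a value d with d > c such that either (b,d,c,a) is an occurrence of the pattern 2431 in σ (i.e. b,d,c,a occur in σ in this order), or (b,d,a,c) is an occurrence of the pattern 2413 in σ (i.e. b,d,a,c occur in σ in this order) and there is no value e > c such that b,d,a,e,c occur in σ in this order. -/

import Mathlib

private theorem length_takeWhile_ne_lt {w : List ℕ} {m : ℕ} (hm : m ∈ w) :
    (w.takeWhile (· ≠ m)).length < w.length := by
  induction w with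
  | nil => cases hm
  | cons a as ih =>
    by_cases ha : a = m
    · subst ha
      simp [List.takeWhile_cons]
    · rw [List.takeWhile_cons_of_pos (by simpa using ha)]
      have hm' : m ∈ as := by
        rcases List.mem_cons.mp hm with h | h
        · exact absurd h.symm ha
        · exact h
      simpa using Nat.succ_lt_succ (ih hm')

private theorem length_tail_dropWhile_lt {w : List ℕ} (hw : w ≠ []) (p : ℕ → Bool) :
    ((w.dropWhile p).tail).length < w.length := by
  cases hd : w.dropWhile p with
  | nil => simpa using List.length_pos_iff.mpr hw
  | cons x xs =>
    have h1 : (x :: xs).length ≤ w.length := by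
      rw [← hd]; exact (List.dropWhile_sublist p).length_le
    simp only [List.tail_cons]
    exact lt_of_lt_of_le (by simp) h1

/-- The classical stack sort operator on words: `S(ε) = ε` and `S(L m R) = S(L) S(R) m`,
where `m` is the largest entry of the word `L m R`. -/
def stackSort : List ℕ → List ℕ
  | [] => []
  | a :: as =>
    let m := ((a :: as).max?).getD 0
    stackSort ((a :: as).takeWhile (· ≠ m)) ++
      stackSort (((a :: as).dropWhile (· ≠ m)).tail) ++ [m]
termination_by w => w.length
decreasing_by
  · refine length_takeWhile_ne_lt ?_
    have : (a :: as).max? = some (((a :: as).max?).getD 0) := by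
      cases h : (a :: as).max? with
      | none => simp [List.max?_eq_none_iff] at h
      | some b => simp
    exact List.max?_mem this
  · exact length_tail_dropWhile_lt (by simp) _

/-- The revstack sort operator `T = S ∘ rev`. -/
def revstackSort (w : List ℕ) : List ℕ := stackSort w.reverse

/-- The word of the identity permutation of `{1,…,n}`, namely `1 2 ⋯ n`. -/
def idPerm (n : ℕ) : List ℕ := List.range' 1 n

/-- `w` is (the word of) a permutation of `{1,…,n}`. -/
def IsPermWord (n : ℕ) (w : List ℕ) : Prop := w.Perm (idPerm n)

/-- `x` precedes `y` in the word `w`, i.e. the position of `x` is smaller than that of `y`. -/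
def Precedes (w : List ℕ) (x y : ℕ) : Prop := w.idxOf x < w.idxOf y

/-- `w` contains an occurrence of the pattern `132`: values `a < b < c` occurring in
the order `a, c, b`. -/
def Contains132 (w : List ℕ) : Prop :=
  ∃ a b c, a ∈ w ∧ b ∈ w ∧ c ∈ w ∧ a < b ∧ b < c ∧ Precedes w a c ∧ Precedes w c b

/-- `w` contains an occurrence of the pattern `2431`: values `a < b < c < d` occurring in
the order `b, d, c, a`. -/
def Contains2431 (w : List ℕ) : Prop :=
  ∃ a b c d, a ∈ w ∧ b ∈ w ∧ c ∈ w ∧ d ∈ w ∧ a < b ∧ b < c ∧ c < d ∧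
    Precedes w b d ∧ Precedes w d c ∧ Precedes w c a

/-- `w` contains an occurrence of the barred pattern `241 5̄ 3`: values `a < b < c < d`
occurring in the order `b, d, a, c` with no value `e > d` lying between `a` and `c` in `w`. -/
def ContainsBarred24153 (w : List ℕ) : Prop :=
  ∃ a b c d, a ∈ w ∧ b ∈ w ∧ c ∈ w ∧ d ∈ w ∧ a < b ∧ b < c ∧ c < d ∧
    Precedes w b d ∧ Precedes w d a ∧ Precedes w a c ∧
    ¬ ∃ e, e ∈ w ∧ d < e ∧ Precedes w a e ∧ Precedes w e c

/-- The number of descents of a word. -/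
def des (w : List ℕ) : ℕ := ((w.zip w.tail).filter (fun p => p.2 < p.1)).length

/-- The finset of all words of permutations of `{1,…,n}`. -/
def permsOf (n : ℕ) : Finset (List ℕ) := (idPerm n).permutations.toFinset

/-- The finset of `t`-revstack sortable permutations of `{1,…,n}`. -/
def revstackSortable (n t : ℕ) : Finset (List ℕ) :=
  (permsOf n).filter (fun w => revstackSort^[t] w = idPerm n)

/-- The finset of `t`-stack sortable permutations of `{1,…,n}`. -/
def stackSortable (n t : ℕ) : Finset (List ℕ) :=
  (permsOf n).filter (fun w => stackSort^[t] w = idPerm n)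

/-- The descent polynomial `W(A;x) = ∑_{π ∈ A} x^{1+des(π)}` of a set of permutations. -/
noncomputable def descPoly (A : Finset (List ℕ)) : Polynomial ℚ :=
  ∑ w ∈ A, Polynomial.X ^ (1 + des w)

/-- The `m`-th Eulerian polynomial `A_m(x) = ∑_{π ∈ S_m} x^{1+des(π)}`, with `A_0(x) = 1`. -/
noncomputable def eulerianPoly (m : ℕ) : Polynomial ℚ :=
  if m = 0 then 1 else descPoly (permsOf m)

/-- `v_t(n,i)`: the number of `t`-revstack sortable permutations of `{1,…,n}`
with exactly `i` descents. -/
def vNum (t n i : ℕ) : ℕ := ((revstackSortable n t).filter (fun w => des w = i)).card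

/-- `w_t(n,i)`: the number of `t`-stack sortable permutations of `{1,…,n}`
with exactly `i` descents. -/
def wNum (t n i : ℕ) : ℕ := ((stackSortable n t).filter (fun w => des w = i)).card

/-!
If `m` is the largest entry of `w = L m R`, then `T(w) = T(R) T(L) m`. Induction along this
decomposition shows that for entries `x < y` of a word without repeated letters, `y` precedes `x`
in `T(w)` exactly when an entry larger than `y` stands between `x` and `y` in `w`, with `x` first.
For `(b, c)` this produces `d > c` with `b, d, c` in this order in `σ`; for `(a, c)` it says that
no `e > c` stands between `a` and `c` in `σ`. Comparing the positions of `c` and `d` with that of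
`a` then leaves exactly the patterns `2431` and `2413` of the statement.
-/

namespace List

theorem exists_append_cons_max {α : Type*} [LinearOrder α] {w : List α} (hw : w ≠ []) :
    ∃ L m R, w = L ++ m :: R ∧ m ∉ L ∧ ∀ x ∈ w, x ≤ m := by
  have hne : w.toFinset.Nonempty := toFinset_nonempty_iff w |>.mpr hw
  obtain ⟨L, R, hmL, hw, -⟩ := exists_erase_eq (mem_toFinset.mp (Finset.max'_mem _ hne))
  exact ⟨L, _, R, hw, hmL, fun x hx => Finset.le_max' _ x (mem_toFinset.mpr hx)⟩

theorem induction_on_max {α : Type*} [LinearOrder α] {P : List α → Prop} (nil : P [])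
    (step : ∀ L m R, m ∉ L → (∀ x ∈ L, x ≤ m) → (∀ x ∈ R, x ≤ m) → P L → P R →
      P (L ++ m :: R))
    (w : List α) : P w := by
  induction h : w.length using Nat.strong_induction_on generalizing w with
  | _ n ih =>
    rcases eq_or_ne w [] with rfl | hw
    · exact nil
    obtain ⟨L, m, R, rfl, hmL, hmax⟩ := exists_append_cons_max hw
    simp only [length_append, length_cons] at h
    exact step L m R hmL (fun x hx => hmax x (by simp [hx])) (fun x hx => hmax x (by simp [hx]))
      (ih _ (by omega) L rfl) (ih _ (by omega) R rfl)

end List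

open List

section StackSort

variable {L R : List ℕ} {m : ℕ}

theorem stackSort_append_cons (hmL : m ∉ L) (hLm : ∀ x ∈ L, x ≤ m) (hRm : ∀ x ∈ R, x ≤ m) :
    stackSort (L ++ m :: R) = stackSort L ++ stackSort R ++ [m] := by
  have hmax : (L ++ m :: R).max? = some m :=
    max?_eq_some_iff.mpr ⟨by simp, by simpa [or_imp, forall_and] using ⟨hLm, hRm⟩⟩
  have hL : ∀ x ∈ L, decide (x ≠ m) = true := fun x hx => by
    simpa using ne_of_mem_of_not_mem hx hmL
  obtain ⟨a, as, hw⟩ := exists_cons_of_ne_nil (append_ne_nil_of_right_ne_nil L (cons_ne_nil m R))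
  rw [hw, stackSort, ← hw, hmax, Option.getD_some, takeWhile_append_of_pos hL,
    dropWhile_append_of_pos hL]
  simp

theorem revstackSort_append_cons (hmR : m ∉ R) (hLm : ∀ x ∈ L, x ≤ m) (hRm : ∀ x ∈ R, x ≤ m) :
    revstackSort (L ++ m :: R) = revstackSort R ++ revstackSort L ++ [m] := by
  simpa [revstackSort] using
    stackSort_append_cons (L := R.reverse) (R := L.reverse) (by simpa using hmR)
      (by simpa using hRm) (by simpa using hLm)

theorem stackSort_perm (w : List ℕ) : stackSort w ~ w := by
  induction w using List.induction_on_max with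
  | nil => simp [stackSort]
  | step L m R hmL hLm hRm ihL ihR =>
    rw [stackSort_append_cons hmL hLm hRm]
    exact (perm_append_singleton _ _).trans (((ihL.append ihR).cons m).trans perm_middle.symm)

theorem revstackSort_perm (w : List ℕ) : revstackSort w ~ w :=
  (stackSort_perm _).trans (reverse_perm w)

end StackSort

section Precedes

variable {u v w : List ℕ} {x y z : ℕ}

theorem Precedes.mem (h : Precedes w x y) : x ∈ w :=
  idxOf_lt_length_iff.mp (h.trans_le idxOf_le_length)

theorem Precedes.asymm (h : Precedes w x y) : ¬Precedes w y x :=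
  Nat.lt_asymm h

theorem Precedes.trans (hxy : Precedes w x y) (hyz : Precedes w y z) : Precedes w x z :=
  Nat.lt_trans hxy hyz

theorem precedes_or_precedes (hx : x ∈ w) (hxy : x ≠ y) : Precedes w x y ∨ Precedes w y x :=
  Nat.lt_or_gt_of_ne fun h => hxy ((idxOf_inj hx).mp h)

theorem precedes_append_of_mem_of_notMem (hx : x ∈ u) (hy : y ∉ u) : Precedes (u ++ v) x y := by
  unfold Precedes
  rw [idxOf_append_of_mem hx, idxOf_append_of_notMem hy]
  exact (idxOf_lt_length_iff.mpr hx).trans_le (Nat.le_add_right _ _)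

theorem precedes_append_left_iff (hy : y ∈ u) : Precedes (u ++ v) x y ↔ Precedes u x y := by
  unfold Precedes
  rw [idxOf_append_of_mem hy]
  by_cases hx : x ∈ u
  · rw [idxOf_append_of_mem hx]
  · rw [idxOf_append_of_notMem hx, idxOf_of_notMem hx]
    have := idxOf_lt_length_iff.mpr hy
    omega

theorem precedes_append_right_iff (hx : x ∉ u) (hy : y ∉ u) :
    Precedes (u ++ v) x y ↔ Precedes v x y := by
  unfold Precedes
  rw [idxOf_append_of_notMem hx, idxOf_append_of_notMem hy]
  omega

end Precedes

def HasLargerBetween (w : List ℕ) (x y : ℕ) : Prop :=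
  ∃ z ∈ w, y < z ∧ Precedes w x z ∧ Precedes w z y

section HasLargerBetween

variable {u v : List ℕ} {x y : ℕ}

theorem hasLargerBetween_append_left_iff (hy : y ∈ u) :
    HasLargerBetween (u ++ v) x y ↔ HasLargerBetween u x y := by
  constructor
  · rintro ⟨z, -, hyz, hxz, hzy⟩
    have hzy' := (precedes_append_left_iff hy).mp hzy
    exact ⟨z, hzy'.mem, hyz, (precedes_append_left_iff hzy'.mem).mp hxz, hzy'⟩
  · rintro ⟨z, hz, hyz, hxz, hzy⟩
    exact ⟨z, mem_append_left _ hz, hyz, (precedes_append_left_iff hz).mpr hxz,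
      (precedes_append_left_iff hy).mpr hzy⟩

theorem hasLargerBetween_append_right_iff (huv : u.Disjoint v) (hx : x ∉ u) (hy : y ∉ u) :
    HasLargerBetween (u ++ v) x y ↔ HasLargerBetween v x y := by
  constructor
  · rintro ⟨z, hz, hyz, hxz, hzy⟩
    have hzu : z ∉ u := fun hzu => hx ((precedes_append_left_iff hzu).mp hxz).mem
    exact ⟨z, (mem_append.mp hz).resolve_left hzu, hyz,
      (precedes_append_right_iff hx hzu).mp hxz, (precedes_append_right_iff hzu hy).mp hzy⟩
  · rintro ⟨z, hz, hyz, hxz, hzy⟩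
    have hzu : z ∉ u := fun hzu => huv hzu hz
    exact ⟨z, mem_append_right _ hz, hyz,
      (precedes_append_right_iff hx hzu).mpr hxz, (precedes_append_right_iff hzu hy).mpr hzy⟩

end HasLargerBetween

theorem revstackSort_precedes_iff {w : List ℕ} (hw : w.Nodup) {x y : ℕ} (hx : x ∈ w)
    (hy : y ∈ w) (hxy : x < y) :
    Precedes (revstackSort w) y x ↔ HasLargerBetween w x y := by
  induction w using List.induction_on_max with
  | nil => simp at hx
  | step L m R hmL hLm hRm ihL ihR =>
    obtain ⟨hL, hmR, hR, hLmR⟩ : L.Nodup ∧ m ∉ R ∧ R.Nodup ∧ L.Disjoint (m :: R) := by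
      simpa [nodup_append', nodup_cons, and_assoc] using hw
    have hLR : L.Disjoint R := fun a ha haR => hLmR ha (mem_cons_of_mem m haR)
    have hmax : ∀ a ∈ L ++ m :: R, a ≤ m := by simpa [or_imp, forall_and] using ⟨hLm, hRm⟩
    have hxm : x ≠ m := by have := hmax y hy; omega
    have hRm' : ∀ a ∈ R, a ≠ m := fun a ha => ne_of_mem_of_not_mem ha hmR
    have memTL {a : ℕ} : a ∈ revstackSort L ↔ a ∈ L := (revstackSort_perm L).mem_iff
    have memTR {a : ℕ} : a ∈ revstackSort R ↔ a ∈ R := (revstackSort_perm R).mem_iff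
    -- `L ++ ([m] ++ R)` exposes the blocks `L`, `[m]`, `R` to the lemmas on appends
    rw [revstackSort_append_cons hmR hLm hRm, ← singleton_append (x := m) (l := R)]
    simp only [mem_append, mem_cons, hxm, false_or] at hx hy
    rcases hy with hyL | rfl | hyR
    · rcases hx with hxL | hxR
      · rw [append_assoc, precedes_append_right_iff (hLR hyL <| memTR.mp ·)
          (hLR hxL <| memTR.mp ·), precedes_append_left_iff (memTL.mpr hxL), ihL hL hxL hyL,
          hasLargerBetween_append_left_iff hyL]
      · refine iff_of_false (append_assoc .. ▸ (precedes_append_of_mem_of_notMem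
          (memTR.mpr hxR) (hLR hyL <| memTR.mp ·)).asymm) ?_
        rintro ⟨z, -, -, hxz, hzy⟩
        exact (hxz.trans hzy).asymm (precedes_append_of_mem_of_notMem hyL (hLR · hxR))
    · refine iff_of_false (precedes_append_of_mem_of_notMem (by simp [memTL, memTR, hx.symm])
        (by simp [memTL, memTR, hmL, hmR])).asymm ?_
      rintro ⟨z, hz, hyz, -⟩
      exact absurd (hmax z (by simpa using hz)) (not_le.mpr hyz)
    · have hyL : y ∉ L := (hLR · hyR)
      rcases hx with hxL | hxR
      · refine iff_of_true (append_assoc .. ▸ precedes_append_of_mem_of_notMem (memTR.mpr hyR)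
          (hLR hxL <| memTR.mp ·)) ⟨m, by simp, ?_, precedes_append_of_mem_of_notMem hxL hmL, ?_⟩
        · exact lt_of_le_of_ne (hRm y hyR) (hRm' y hyR)
        · exact (precedes_append_right_iff hmL hyL).mpr
            (precedes_append_of_mem_of_notMem (mem_singleton_self m) (by simp [hRm' y hyR]))
      · rw [append_assoc, precedes_append_left_iff (memTR.mpr hxR), ihR hR hxR hyR,
          ← hasLargerBetween_append_right_iff (u := [m]) (by simpa using hmR)
            (by simp [hRm' x hxR]) (by simp [hRm' y hyR]),
          ← hasLargerBetween_append_right_iff (v := [m] ++ R) hLmR (hLR · hxR) hyL]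

theorem pattern_in_revstack_image
    (n : ℕ) (σ : List ℕ) (hσ : IsPermWord n σ) (a b c : ℕ)
    (haT : a ∈ revstackSort σ) (hbT : b ∈ revstackSort σ) (hcT : c ∈ revstackSort σ)
    (hab : a < b) (hbc : b < c)
    (hac : Precedes (revstackSort σ) a c) (hcb : Precedes (revstackSort σ) c b) :
    ∃ d, d ∈ σ ∧ c < d ∧
      ((Precedes σ b d ∧ Precedes σ d c ∧ Precedes σ c a) ∨
       (Precedes σ b d ∧ Precedes σ d a ∧ Precedes σ a c ∧
         ¬ ∃ e, e ∈ σ ∧ c < e ∧ Precedes σ b d ∧ Precedes σ d a ∧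
           Precedes σ a e ∧ Precedes σ e c)) := by
  have hnd : σ.Nodup := hσ.nodup_iff.mpr nodup_range'
  have ha : a ∈ σ := (revstackSort_perm σ).subset haT
  have hc : c ∈ σ := (revstackSort_perm σ).subset hcT
  obtain ⟨d, hd, hcd, hbd, hdc⟩ :=
    (revstackSort_precedes_iff hnd ((revstackSort_perm σ).subset hbT) hc hbc).mp hcb
  have no_larger_between_a_c : ¬HasLargerBetween σ a c := fun h =>
    hac.asymm ((revstackSort_precedes_iff hnd ha hc (hab.trans hbc)).mpr h)
  refine ⟨d, hd, hcd, ?_⟩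
  rcases precedes_or_precedes hc (hab.trans hbc).ne' with hca | hac'
  · exact .inl ⟨hbd, hdc, hca⟩
  rcases precedes_or_precedes hd (hab.trans (hbc.trans hcd)).ne' with hda | had
  · exact .inr ⟨hbd, hda, hac', fun ⟨e, he, hce, _, _, hae, hec⟩ =>
      no_larger_between_a_c ⟨e, he, hce, hae, hec⟩⟩
  · exact (no_larger_between_a_c ⟨d, hd, hcd, had, hdc⟩).elim
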